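/- arXiv:1807.08305 — 4 statements merged into one kernel-verified Lean document; each statement's English description precedes it below -/
import Mathlib

section
/- Let x be a zero-mean square-integrable random vector in ℝ^n with covariance matrix Σ_x = E[x xᵀ], let Γ ∈ ℝ^{k×n}, and set θ̃ = Γx. Let Q : ℝ^n → ℝ^n be a Borel measurable map with finite range that satisfies the centroid condition Q(x) = E[x | Q(x)] almost surely (as holds for the MSE-optimal quantizer of x). Then, with Σ_Q = E[Q(x) Q(x)ᵀ], the estimation error of θ̃ from the quantizer output satisfies E‖θ̃ − E[θ̃ | Q(x)]‖² = Tr(Γᵀ Γ (Σ_x − Σ_Q)). -/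
/-!
Write `E` for conditional expectation given `Q(x)` and `e = x − Q(x)`. By the centroid
condition `Q(x) = E[x]`, so linearity gives `E[Γx] = Γ Q(x)`, the error is `Γe`, and the
distortion is `E‖Γe‖² = Tr(ΓᵀΓ E[e eᵀ])`. Since `E[x_j]` is `σ(Q(x))`-measurable, pulling it
out of `E` gives `E[E[x_j] x_l] = E[E[x_j] E[x_l]]`; the cross terms of `E[e eᵀ]` therefore
collapse and `E[e eᵀ] = Σ_x − Σ_Q`.
-/

open MeasureTheory Matrix

section

open Finset

variable {Ω : Type*} {m m₀ : MeasurableSpace Ω} {μ : Measure Ω}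

lemma integral_condExp_mul_eq_integral_condExp_mul_condExp [IsFiniteMeasure μ] (hm : m ≤ m₀)
    {f g : Ω → ℝ} (hf : MemLp f 2 μ) (hg : MemLp g 2 μ) :
    ∫ ω, (μ[f|m]) ω * g ω ∂μ = ∫ ω, (μ[f|m]) ω * (μ[g|m]) ω ∂μ :=
  calc ∫ ω, (μ[f|m]) ω * g ω ∂μ
      = ∫ ω, (μ[μ[f|m] * g|m]) ω ∂μ := (integral_condExp hm).symm
    _ = _ := integral_congr_ae <|
        condExp_mul_of_stronglyMeasurable_left stronglyMeasurable_condExp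
          ((hf.condExp one_le_two).integrable_mul hg) (hg.integrable one_le_two)

lemma integral_sub_condExp_mul_sub_condExp [IsFiniteMeasure μ] (hm : m ≤ m₀)
    {f g : Ω → ℝ} (hf : MemLp f 2 μ) (hg : MemLp g 2 μ) :
    ∫ ω, (f ω - (μ[f|m]) ω) * (g ω - (μ[g|m]) ω) ∂μ
      = ∫ ω, f ω * g ω ∂μ - ∫ ω, (μ[f|m]) ω * (μ[g|m]) ω ∂μ := by
  have hf' : MemLp (μ[f|m]) 2 μ := hf.condExp one_le_two
  have hg' : MemLp (μ[g|m]) 2 μ := hg.condExp one_le_two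
  have hfg : ∫ ω, (μ[f|m]) ω * g ω ∂μ = ∫ ω, (μ[f|m]) ω * (μ[g|m]) ω ∂μ :=
    integral_condExp_mul_eq_integral_condExp_mul_condExp hm hf hg
  have hgf : ∫ ω, (μ[g|m]) ω * f ω ∂μ = ∫ ω, (μ[f|m]) ω * (μ[g|m]) ω ∂μ := by
    simp_rw [integral_condExp_mul_eq_integral_condExp_mul_condExp hm hg hf, mul_comm]
  have i₁ : Integrable (fun ω => f ω * g ω) μ := hf.integrable_mul hg
  have i₂ : Integrable (fun ω => (μ[f|m]) ω * g ω) μ := hf'.integrable_mul hg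
  have i₃ : Integrable (fun ω => (μ[g|m]) ω * f ω) μ := hg'.integrable_mul hf
  have i₄ : Integrable (fun ω => (μ[f|m]) ω * (μ[g|m]) ω) μ := hf'.integrable_mul hg'
  calc ∫ ω, (f ω - (μ[f|m]) ω) * (g ω - (μ[g|m]) ω) ∂μ
      = ∫ ω, f ω * g ω - (μ[f|m]) ω * g ω - (μ[g|m]) ω * f ω
          + (μ[f|m]) ω * (μ[g|m]) ω ∂μ := by congr 1 with ω; ring
    _ = _ := by
      rw [integral_add (by exact (i₁.sub i₂).sub i₃) i₄, integral_sub (by exact i₁.sub i₂) i₃,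
        integral_sub i₁ i₂, hfg, hgf]
      ring

lemma condExp_mulVec_apply {ι κ : Type*} [Fintype ι] (A : Matrix κ ι ℝ) {f : Ω → ι → ℝ}
    (hf : ∀ j, Integrable (fun ω => f ω j) μ) (i : κ) :
    μ[fun ω => (A *ᵥ f ω) i|m] =ᵐ[μ] fun ω => (A *ᵥ fun j => (μ[fun ω' => f ω' j|m]) ω) i := by
  have hsum : (fun ω => (A *ᵥ f ω) i) = ∑ j, A i j • fun ω => f ω j := by
    ext ω; simp [mulVec, dotProduct]
  rw [hsum]
  filter_upwards [condExp_finsetSum (s := univ) (fun j _ => (hf j).smul (A i j)) m,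
    ae_all_iff.2 fun j => condExp_smul (A i j) (fun ω => f ω j) m] with ω hω hsmul
  simp only [hω, Finset.sum_apply, hsmul, Pi.smul_apply, smul_eq_mul, mulVec, dotProduct]

lemma sum_sq_mulVec {ι κ : Type*} [Fintype ι] [Fintype κ] (A : Matrix κ ι ℝ) (v : ι → ℝ) :
    ∑ i, (A *ᵥ v) i ^ 2 = ∑ j, ∑ l, (Aᵀ * A) j l * (v l * v j) := by
  simp only [mulVec, dotProduct, sq, mul_apply, transpose_apply, sum_mul, mul_sum]
  rw [sum_comm]
  refine sum_congr rfl fun j _ => ?_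
  rw [sum_comm]
  refine sum_congr rfl fun l _ => sum_congr rfl fun i _ => by ring

lemma integral_sum_sq_mulVec {ι κ : Type*} [Fintype ι] [Fintype κ] (A : Matrix κ ι ℝ)
    {e : Ω → ι → ℝ} (he : ∀ j, MemLp (fun ω => e ω j) 2 μ)
    (C : Matrix ι ι ℝ) (hC : ∀ j l, C j l = ∫ ω, e ω j * e ω l ∂μ) :
    ∫ ω, ∑ i, (A *ᵥ e ω) i ^ 2 ∂μ = trace (Aᵀ * A * C) := by
  have hint : ∀ j l, Integrable (fun ω => (Aᵀ * A) j l * (e ω l * e ω j)) μ :=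
    fun j l => ((he l).integrable_mul (he j)).const_mul _
  simp_rw [sum_sq_mulVec]
  rw [integral_finsetSum _ fun j _ => integrable_finsetSum _ fun l _ => hint j l]
  simp_rw [integral_finsetSum _ fun l _ => hint _ l, integral_const_mul, ← hC]
  rfl

lemma integral_sub_mul_sub_of_ae_eq_condExp [IsFiniteMeasure μ] (hm : m ≤ m₀) {ι : Type*}
    {x y : Ω → ι → ℝ} (hx : ∀ j, MemLp (fun ω => x ω j) 2 μ)
    (hy : ∀ j, (fun ω => y ω j) =ᵐ[μ] μ[fun ω => x ω j|m]) (j l : ι) :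
    ∫ ω, (x ω - y ω) j * (x ω - y ω) l ∂μ
      = ∫ ω, x ω j * x ω l ∂μ - ∫ ω, y ω j * y ω l ∂μ := by
  have hyy : ∫ ω, y ω j * y ω l ∂μ
      = ∫ ω, (μ[fun ω => x ω j|m]) ω * (μ[fun ω => x ω l|m]) ω ∂μ := by
    refine integral_congr_ae ?_
    filter_upwards [hy j, hy l] with ω hj hl
    rw [hj, hl]
  rw [hyy, ← integral_sub_condExp_mul_sub_condExp hm (hx j) (hx l)]
  refine integral_congr_ae ?_
  filter_upwards [hy j, hy l] with ω hj hl
  rw [Pi.sub_apply, Pi.sub_apply, hj, hl]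

theorem integral_sum_sq_mulVec_sub_condExp [IsFiniteMeasure μ] (hm : m ≤ m₀)
    {ι κ : Type*} [Fintype ι] [Fintype κ] (A : Matrix κ ι ℝ)
    {x y : Ω → ι → ℝ} (hx : ∀ j, MemLp (fun ω => x ω j) 2 μ)
    (hy : ∀ j, (fun ω => y ω j) =ᵐ[μ] μ[fun ω => x ω j|m])
    (Sx : Matrix ι ι ℝ) (hSx : ∀ j l, Sx j l = ∫ ω, x ω j * x ω l ∂μ)
    (Sy : Matrix ι ι ℝ) (hSy : ∀ j l, Sy j l = ∫ ω, y ω j * y ω l ∂μ) :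
    ∫ ω, ∑ i, ((A *ᵥ x ω) i - (μ[fun ω' => (A *ᵥ x ω') i|m]) ω) ^ 2 ∂μ
      = trace (Aᵀ * A * (Sx - Sy)) := by
  have hy2 : ∀ j, MemLp (fun ω => y ω j) 2 μ :=
    fun j => ((hx j).condExp one_le_two).ae_eq (hy j).symm
  have hAx : ∀ i, μ[fun ω => (A *ᵥ x ω) i|m] =ᵐ[μ] fun ω => (A *ᵥ y ω) i := by
    intro i
    filter_upwards [condExp_mulVec_apply A (fun j => (hx j).integrable one_le_two) i,
      ae_all_iff.2 hy] with ω hω hyω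
    rw [hω]
    congr with j
    exact (hyω j).symm
  have hcov : ∀ j l, (Sx - Sy) j l = ∫ ω, (x ω - y ω) j * (x ω - y ω) l ∂μ := fun j l => by
    rw [Matrix.sub_apply, hSx, hSy, integral_sub_mul_sub_of_ae_eq_condExp hm hx hy]
  calc _ = ∫ ω, ∑ i, (A *ᵥ (x ω - y ω)) i ^ 2 ∂μ := by
        refine integral_congr_ae ?_
        filter_upwards [ae_all_iff.2 hAx] with ω hω
        simp only [hω, mulVec_sub, Pi.sub_apply]
    _ = _ := integral_sum_sq_mulVec A (fun j => (hx j).sub (hy2 j)) _ hcov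

end

theorem task_ignorant_linear_distortion_general
    {Ω : Type*} [MeasurableSpace Ω] (μ : Measure Ω) [IsProbabilityMeasure μ]
    {k n : ℕ}
    (x : Ω → Fin n → ℝ) (hxmeas : Measurable x)
    (hx2 : ∀ i, MemLp (fun ω => x ω i) 2 μ)
    (Sx : Matrix (Fin n) (Fin n) ℝ)
    (hSx : ∀ i j, Sx i j = ∫ ω, x ω i * x ω j ∂μ)
    (Γ : Matrix (Fin k) (Fin n) ℝ)
    (Q : (Fin n → ℝ) → (Fin n → ℝ)) (hQmeas : Measurable Q)
    (hcentroid : ∀ i, (fun ω => Q (x ω) i)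
      =ᵐ[μ] condExp (MeasurableSpace.comap (fun ω => Q (x ω)) inferInstance) μ
        (fun ω => x ω i))
    (SQ : Matrix (Fin n) (Fin n) ℝ)
    (hSQ : ∀ i j, SQ i j = ∫ ω, Q (x ω) i * Q (x ω) j ∂μ) :
    (∫ ω, ∑ i, (Γ.mulVec (x ω) i
        - condExp (MeasurableSpace.comap (fun ω' => Q (x ω')) inferInstance) μ
            (fun ω' => Γ.mulVec (x ω') i) ω) ^ 2 ∂μ)
      = Matrix.trace (Γᵀ * Γ * (Sx - SQ)) :=
  integral_sum_sq_mulVec_sub_condExp (hQmeas.comp hxmeas).comap_le Γ hx2 hcentroid Sx hSx SQ hSQ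

/-- If `θ̃ = Γx` and `Q` is a finite-range quantizer of `x` satisfying the
centroid condition, then `E‖θ̃ − E[θ̃ | Q(x)]‖² = Tr(Γᵀ Γ (Σ_x − Σ_Q))`. -/
theorem task_ignorant_linear_distortion
    {Ω : Type*} [MeasurableSpace Ω] (μ : Measure Ω) [IsProbabilityMeasure μ]
    {k n : ℕ}
    (x : Ω → Fin n → ℝ) (hxmeas : Measurable x)
    (hx2 : ∀ i, MemLp (fun ω => x ω i) 2 μ)
    (hxmean : ∀ i, (∫ ω, x ω i ∂μ) = 0)
    (Sx : Matrix (Fin n) (Fin n) ℝ)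
    (hSx : ∀ i j, Sx i j = ∫ ω, x ω i * x ω j ∂μ)
    (Γ : Matrix (Fin k) (Fin n) ℝ)
    (Q : (Fin n → ℝ) → (Fin n → ℝ)) (hQmeas : Measurable Q)
    (hQfin : (Set.range Q).Finite)
    (hcentroid : ∀ i, (fun ω => Q (x ω) i)
      =ᵐ[μ] condExp (MeasurableSpace.comap (fun ω => Q (x ω)) inferInstance) μ
        (fun ω => x ω i))
    (SQ : Matrix (Fin n) (Fin n) ℝ)
    (hSQ : ∀ i j, SQ i j = ∫ ω, Q (x ω) i * Q (x ω) j ∂μ) :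
    (∫ ω, ∑ i, (Γ.mulVec (x ω) i
        - condExp (MeasurableSpace.comap (fun ω' => Q (x ω')) inferInstance) μ
            (fun ω' => Γ.mulVec (x ω') i) ω) ^ 2 ∂μ)
      = Matrix.trace (Γᵀ * Γ * (Sx - SQ)) :=
  task_ignorant_linear_distortion_general μ x hxmeas hx2 Sx hSx Γ Q hQmeas hcentroid SQ hSQ
end

section
/- Let Σ ∈ ℝ^{n×n} be symmetric positive definite, Γ ∈ ℝ^{k×n}, and c > 0. For A ∈ ℝ^{p×n} with A ≠ 0 define MSE(A) = Tr(Γ Σ Γᵀ) − Tr( Γ Σ Aᵀ ( A Σ Aᵀ + c · m(A) · I_p )^{−1} A Σ Γᵀ ), where m(A) = max_{1 ≤ l ≤ p} (A Σ Aᵀ)_{l,l}. Then for every A ≠ 0 there exists a real orthogonal matrix U ∈ ℝ^{p×p} such that MSE(U A) = Tr(Γ Σ Γᵀ) − Tr( Γ Σ Aᵀ ( A Σ Aᵀ + (c/p) Tr(A Σ Aᵀ) I_p )^{−1} A Σ Γᵀ ), and MSE(A) ≥ MSE(U A). -/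
/-!
At a fixed noise level `x`, the MSE `Tr(ΓΣΓᵀ) - Tr(ΓΣAᵀ(AΣAᵀ + xI)⁻¹AΣΓᵀ)` is invariant under
`A ↦ UA` for orthogonal `U`; rotating `A` only changes the noise level `c · m(UA)`. Every real
square matrix is orthogonally congruent to one with constant diagonal (by connectedness of the unit
sphere some unit vector `v` has `vᵀ M v = Tr M / p`; complete `v` to an orthonormal basis and
recurse on the complementary block), so some `U` achieves `m(UA) = Tr(AΣAᵀ)/p ≤ m(A)`. Finally
`Tr(B (M + xI)⁻¹ Bᵀ)` is antitone in `x > 0` because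
`(M + aI)⁻¹ - (M + bI)⁻¹ = (b - a) ((M + aI)(M + bI))⁻¹` is positive semidefinite.
-/

open Matrix

noncomputable def hlMSE {k n p : ℕ} (S : Matrix (Fin n) (Fin n) ℝ)
    (Γ : Matrix (Fin k) (Fin n) ℝ) (c : ℝ) (A : Matrix (Fin p) (Fin n) ℝ) : ℝ :=
  Matrix.trace (Γ * S * Γᵀ)
    - Matrix.trace (Γ * S * Aᵀ *
        (A * S * Aᵀ
          + (c * (⨆ l : Fin p, (A * S * Aᵀ) l l)) • (1 : Matrix (Fin p) (Fin p) ℝ))⁻¹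
        * A * S * Γᵀ)

namespace Matrix

section ShiftedInverse

variable {m n : Type*} [DecidableEq n] {M : Matrix n n ℝ} {a b : ℝ}

lemma PosSemidef.posDef_add_smul_one (hM : M.PosSemidef) (ha : 0 < a) : (M + a • 1).PosDef :=
  PosDef.posSemidef_add hM (PosDef.one.smul ha)

variable [Fintype n]

lemma PosSemidef.posDef_add_smul_one_mul_add_smul_one (hM : M.PosSemidef) (ha : 0 < a)
    (hb : 0 < b) : ((M + a • 1) * (M + b • 1)).PosDef := by
  have hsq : (M * M).PosSemidef := by
    simpa only [hM.isHermitian.eq] using posSemidef_conjTranspose_mul_self M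
  have hexpand : (M + a • 1) * (M + b • 1) = M * M + (a + b) • M + (a * b) • 1 := by
    simp only [Matrix.add_mul, Matrix.mul_add, Matrix.smul_mul, Matrix.mul_smul, Matrix.one_mul,
      Matrix.mul_one]
    module
  rw [hexpand]
  exact PosDef.posSemidef_add (hsq.add (hM.smul (by positivity))) (PosDef.one.smul (by positivity))

lemma PosSemidef.inv_add_smul_one_sub_inv_add_smul_one (hM : M.PosSemidef) (ha : 0 < a)
    (hb : 0 < b) :
    (M + a • 1)⁻¹ - (M + b • 1)⁻¹ = (b - a) • ((M + a • 1) * (M + b • 1))⁻¹ := by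
  have hX := (isUnit_iff_isUnit_det _).mp (hM.posDef_add_smul_one ha).isUnit
  have hY := (isUnit_iff_isUnit_det _).mp (hM.posDef_add_smul_one hb).isUnit
  calc (M + a • 1)⁻¹ - (M + b • 1)⁻¹
      = (M + a • 1)⁻¹ * ((M + b • 1) - (M + a • 1)) * (M + b • 1)⁻¹ := by
        rw [Matrix.mul_sub, Matrix.sub_mul, nonsing_inv_mul _ hX, Matrix.mul_assoc,
          mul_nonsing_inv _ hY, Matrix.one_mul, Matrix.mul_one]
    _ = (b - a) • ((M + b • 1) * (M + a • 1))⁻¹ := by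
        rw [add_sub_add_left_eq_sub, ← sub_smul, Matrix.mul_smul, Matrix.mul_one,
          Matrix.smul_mul, Matrix.mul_inv_rev]
    _ = (b - a) • ((M + a • 1) * (M + b • 1))⁻¹ := by
        congr 2
        noncomm_ring
        module

variable [Fintype m]

theorem PosSemidef.trace_mul_inv_add_smul_one_mul_transpose_antitone (hM : M.PosSemidef)
    (B : Matrix m n ℝ) (ha : 0 < a) (hab : a ≤ b) :
    trace (B * (M + b • 1)⁻¹ * Bᵀ) ≤ trace (B * (M + a • 1)⁻¹ * Bᵀ) := by
  have hb := ha.trans_le hab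
  have hdiff : (B * ((M + a • 1)⁻¹ - (M + b • 1)⁻¹) * Bᵀ).PosSemidef := by
    rw [hM.inv_add_smul_one_sub_inv_add_smul_one ha hb]
    simpa using (((hM.posDef_add_smul_one_mul_add_smul_one ha hb).inv.posSemidef).smul
      (sub_nonneg.mpr hab)).mul_mul_conjTranspose_same B
  have := hdiff.trace_nonneg
  rwa [Matrix.mul_sub, Matrix.sub_mul, trace_sub, sub_nonneg] at this

end ShiftedInverse

section ConstantDiagonal

variable {ι : Type*} [Fintype ι]

lemma exists_diag_le_trace_div_card [Nonempty ι] (M : Matrix ι ι ℝ) :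
    ∃ i, M i i ≤ trace M / Fintype.card ι := by
  obtain ⟨i, -, hi⟩ := Finset.exists_le_of_sum_le (f := fun l => M l l)
    (g := fun _ => trace M / Fintype.card ι) Finset.univ_nonempty
    (by simp [trace, mul_div_cancel₀, Fintype.card_ne_zero])
  exact ⟨i, hi⟩

lemma exists_trace_div_card_le_diag [Nonempty ι] (M : Matrix ι ι ℝ) :
    ∃ i, trace M / Fintype.card ι ≤ M i i := by
  obtain ⟨i, -, hi⟩ := Finset.exists_le_of_sum_le (f := fun _ => trace M / Fintype.card ι)
    (g := fun l => M l l) Finset.univ_nonempty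
    (by simp [trace, mul_div_cancel₀, Fintype.card_ne_zero])
  exact ⟨i, hi⟩

lemma trace_div_card_le_iSup_diag [Nonempty ι] (M : Matrix ι ι ℝ) :
    trace M / Fintype.card ι ≤ ⨆ l, M l l :=
  let ⟨i, hi⟩ := exists_trace_div_card_le_diag M
  hi.trans (le_ciSup (f := fun l => M l l) (Set.finite_range _).bddAbove i)

lemma reindex_mul_mul_transpose {α β : Type*} [Fintype α] [Fintype β] (e : α ≃ β)
    (B : Matrix α α ℝ) (N : Matrix β β ℝ) :
    reindex e e B * N * (reindex e e B)ᵀ = reindex e e (B * reindex e.symm e.symm N * Bᵀ) := by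
  simp only [reindex_apply, Equiv.symm_symm]
  rw [← submatrix_mul_equiv _ _ _ e.symm, ← submatrix_mul_equiv _ _ _ e.symm]
  simp [transpose_submatrix]

section Blocks

variable {α β : Type*} [Fintype α] [Fintype β] [DecidableEq α]

lemma reindex_fromBlocks_one_conj_submatrix_inl (e : α ⊕ β ≃ ι) (W : Matrix β β ℝ)
    (N : Matrix ι ι ℝ) :
    (reindex e e (fromBlocks 1 0 0 W) * N * (reindex e e (fromBlocks 1 0 0 W))ᵀ).submatrix
      (e ∘ Sum.inl) (e ∘ Sum.inl) = N.submatrix (e ∘ Sum.inl) (e ∘ Sum.inl) := by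
  rw [reindex_mul_mul_transpose, ← fromBlocks_toBlocks (reindex e.symm e.symm N)]
  ext a b
  simp [fromBlocks_transpose, fromBlocks_multiply, toBlocks₁₁]

lemma reindex_fromBlocks_one_conj_submatrix_inr (e : α ⊕ β ≃ ι) (W : Matrix β β ℝ)
    (N : Matrix ι ι ℝ) :
    (reindex e e (fromBlocks 1 0 0 W) * N * (reindex e e (fromBlocks 1 0 0 W))ᵀ).submatrix
      (e ∘ Sum.inr) (e ∘ Sum.inr) = W * N.submatrix (e ∘ Sum.inr) (e ∘ Sum.inr) * Wᵀ := by
  rw [reindex_mul_mul_transpose, ← fromBlocks_toBlocks (reindex e.symm e.symm N)]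
  ext a b
  simp [fromBlocks_transpose, fromBlocks_multiply, toBlocks₂₂, submatrix]

variable [DecidableEq β] [DecidableEq ι]

lemma reindex_fromBlocks_one_mem_orthogonalGroup (e : α ⊕ β ≃ ι)
    {W : Matrix β β ℝ} (hW : W ∈ orthogonalGroup β ℝ) :
    reindex e e (fromBlocks 1 0 0 W) ∈ orthogonalGroup ι ℝ := by
  rw [mem_orthogonalGroup_iff] at hW ⊢
  simp [reindex_apply, transpose_submatrix, fromBlocks_transpose, fromBlocks_multiply, hW]

end Blocks

variable [DecidableEq ι]

lemma exists_mem_sphere_dotProduct_mulVec_eq (M : Matrix ι ι ℝ) {i j : ι} {t : ℝ}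
    (ht : t ∈ Set.Icc (M i i) (M j j)) :
    ∃ v ∈ Metric.sphere (0 : EuclideanSpace ℝ ι) 1, v.ofLp ⬝ᵥ M *ᵥ v.ofLp = t := by
  have hsingle (l : ι) :
      EuclideanSpace.single l 1 ∈ Metric.sphere (0 : EuclideanSpace ℝ ι) 1 := by
    simp
  have hquad (l : ι) : (EuclideanSpace.single l 1 : EuclideanSpace ℝ ι).ofLp ⬝ᵥ
      M *ᵥ (EuclideanSpace.single l 1 : EuclideanSpace ℝ ι).ofLp = M l l := by
    simp
  by_cases hij : i = j
  · subst hij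
    exact ⟨_, hsingle i, (hquad i).trans (le_antisymm ht.1 ht.2)⟩
  have hconn : IsPreconnected (Metric.sphere (0 : EuclideanSpace ℝ ι) 1) := by
    refine (isConnected_sphere ?_ 0 zero_le_one).isPreconnected
    rw [← Module.finrank_eq_rank, finrank_euclideanSpace]
    exact_mod_cast Fintype.one_lt_card_iff.mpr ⟨i, j, hij⟩
  refine hconn.intermediate_value (hsingle i) (hsingle j) (Continuous.continuousOn ?_) ?_
  · fun_prop
  · rwa [hquad, hquad]

lemma exists_mem_orthogonalGroup_row_eq {v : EuclideanSpace ℝ ι} (hv : ‖v‖ = 1) (i : ι) :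
    ∃ V ∈ orthogonalGroup ι ℝ, V i = v.ofLp := by
  have hv' : Orthonormal ℝ (({i} : Set ι).domRestrict fun _ => v) :=
    ⟨fun _ => hv, fun k l hkl => (hkl (Subsingleton.elim k l)).elim⟩
  obtain ⟨b, hb⟩ := hv'.exists_orthonormalBasis_extension_of_card_eq (by simp)
  refine ⟨((EuclideanSpace.basisFun ι ℝ).toBasis.toMatrix b)ᵀ, ?_, ?_⟩
  · rw [mem_orthogonalGroup_iff, transpose_transpose, ← mem_orthogonalGroup_iff']
    exact (EuclideanSpace.basisFun ι ℝ).toMatrix_orthonormalBasis_mem_orthogonal b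
  · ext j
    simp [Module.Basis.toMatrix_apply, hb i rfl]

lemma exists_mem_orthogonalGroup_conj_apply_eq_trace_div (M : Matrix ι ι ℝ) (i : ι) :
    ∃ V ∈ orthogonalGroup ι ℝ, (V * M * Vᵀ) i i = trace M / Fintype.card ι := by
  have : Nonempty ι := ⟨i⟩
  obtain ⟨j, hj⟩ := exists_diag_le_trace_div_card M
  obtain ⟨k, hk⟩ := exists_trace_div_card_le_diag M
  obtain ⟨v, hv, hvt⟩ := exists_mem_sphere_dotProduct_mulVec_eq M ⟨hj, hk⟩
  obtain ⟨V, hV, hVi⟩ := exists_mem_orthogonalGroup_row_eq (mem_sphere_zero_iff_norm.mp hv) i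
  exact ⟨V, hV, by rw [← hvt, ← hVi, mul_mul_apply, transpose_transpose]⟩

theorem exists_mem_orthogonalGroup_diag_conj_eq_trace_div (M : Matrix ι ι ℝ) :
    ∃ U ∈ orthogonalGroup ι ℝ, ∀ l, (U * M * Uᵀ) l l = trace M / Fintype.card ι := by
  induction h : Fintype.card ι generalizing ι with
  | zero =>
    have := Fintype.card_eq_zero_iff.mp h
    exact ⟨1, one_mem _, isEmptyElim⟩
  | succ n ih =>
    obtain ⟨i⟩ : Nonempty ι := Fintype.card_pos_iff.mp (by omega)
    obtain ⟨V, hV, hVi⟩ := exists_mem_orthogonalGroup_conj_apply_eq_trace_div M i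
    rw [h, Nat.cast_succ] at hVi
    set N := V * M * Vᵀ
    let e := Equiv.sumCompl (· = i)
    set N₂₂ := N.submatrix (e ∘ Sum.inr) (e ∘ Sum.inr)
    have hcard : Fintype.card {j // j ≠ i} = n := by simp [Fintype.card_subtype_compl, h]
    obtain ⟨W, hW, hWdiag⟩ := ih N₂₂ hcard
    have htr : trace N₂₂ = n * (trace M / (n + 1)) := by
      have hsplit : trace N = N i i + trace N₂₂ :=
        Fintype.sum_eq_add_sum_subtype_ne (fun l => N l l) i
      rw [trace_mul_cycle, (mem_orthogonalGroup_iff' ι ℝ).mp hV, one_mul, hVi] at hsplit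
      rw [eq_sub_of_add_eq' hsplit.symm]
      field_simp
      ring
    set B := reindex e e (fromBlocks 1 0 0 W)
    refine ⟨B * V, mul_mem (reindex_fromBlocks_one_mem_orthogonalGroup e hW) hV, fun l => ?_⟩
    have hconj : B * V * M * (B * V)ᵀ = B * N * Bᵀ := by
      simp only [N, transpose_mul, Matrix.mul_assoc]
    rw [hconj, Nat.cast_succ]
    obtain ⟨s, rfl⟩ := e.surjective l
    rcases s with ⟨_, rfl⟩ | b
    · exact (congrFun₂ (reindex_fromBlocks_one_conj_submatrix_inl e W N) _ _).trans hVi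
    · have : Nonempty {j // j ≠ i} := ⟨b⟩
      have hn : (n : ℝ) ≠ 0 := Nat.cast_ne_zero.mpr (hcard ▸ Fintype.card_ne_zero)
      refine (congrFun₂ (reindex_fromBlocks_one_conj_submatrix_inr e W N) b b).trans ?_
      rw [hWdiag, htr]
      field_simp

end ConstantDiagonal

section Congruence

variable {ν π : Type*} [Fintype ν] {S : Matrix ν ν ℝ}

lemma mul_mul_transpose_apply_self (A : Matrix π ν ℝ) (i : π) :
    (A * S * Aᵀ) i i = A i ⬝ᵥ S *ᵥ A i := by
  rw [dotProduct_mulVec, mul_apply']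
  rfl

lemma PosSemidef.mul_mul_transpose_same [Fintype π] (hS : S.PosSemidef) (A : Matrix π ν ℝ) :
    (A * S * Aᵀ).PosSemidef := by
  simpa only [conjTranspose_eq_transpose_of_trivial] using hS.mul_mul_conjTranspose_same A

lemma PosDef.trace_mul_mul_transpose_pos [Fintype π] (hS : S.PosDef) {A : Matrix π ν ℝ}
    (hA : A ≠ 0) : 0 < trace (A * S * Aᵀ) := by
  obtain ⟨i, hi⟩ : ∃ i, A i ≠ 0 := by
    by_contra! h
    exact hA (ext fun i j => congrFun (h i) j)
  refine Finset.sum_pos' (fun l _ => (hS.posSemidef.mul_mul_transpose_same A).diag_nonneg)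
    ⟨i, Finset.mem_univ i, ?_⟩
  rw [diag_apply, mul_mul_transpose_apply_self]
  exact hS.dotProduct_mulVec_pos hi

end Congruence

end Matrix

section NoiseLevel

variable {κ ν π : Type*} [Fintype κ] [Fintype ν] [Fintype π] [DecidableEq π]

noncomputable def mseAtNoise (S : Matrix ν ν ℝ) (Γ : Matrix κ ν ℝ) (A : Matrix π ν ℝ) (x : ℝ) :
    ℝ :=
  trace (Γ * S * Γᵀ) - trace (Γ * S * Aᵀ * (A * S * Aᵀ + x • 1)⁻¹ * A * S * Γᵀ)

lemma hlMSE_eq_mseAtNoise {k n p : ℕ} (S : Matrix (Fin n) (Fin n) ℝ)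
    (Γ : Matrix (Fin k) (Fin n) ℝ) (c : ℝ) (A : Matrix (Fin p) (Fin n) ℝ) :
    hlMSE S Γ c A = mseAtNoise S Γ A (c * ⨆ l, (A * S * Aᵀ) l l) :=
  rfl

lemma mseAtNoise_orthogonal_mul (S : Matrix ν ν ℝ) (Γ : Matrix κ ν ℝ) (A : Matrix π ν ℝ)
    {U : Matrix π π ℝ} (hU : U ∈ orthogonalGroup π ℝ) (x : ℝ) :
    mseAtNoise S Γ (U * A) x = mseAtNoise S Γ A x := by
  have hUU : Uᵀ * U = 1 := (mem_orthogonalGroup_iff' π ℝ).mp hU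
  have hUU' : U * Uᵀ = 1 := (mem_orthogonalGroup_iff π ℝ).mp hU
  have hconj : U * A * S * (U * A)ᵀ + x • 1 = U * (A * S * Aᵀ + x • 1) * Uᵀ := by
    rw [transpose_mul, Matrix.mul_add, Matrix.add_mul, Matrix.mul_smul, Matrix.smul_mul,
      Matrix.mul_one, hUU']
    simp only [Matrix.mul_assoc]
  have hinv : (U * (A * S * Aᵀ + x • 1) * Uᵀ)⁻¹ = U * (A * S * Aᵀ + x • 1)⁻¹ * Uᵀ := by
    rw [Matrix.mul_inv_rev, Matrix.mul_inv_rev, inv_eq_left_inv hUU, inv_eq_left_inv hUU']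
    simp only [Matrix.mul_assoc]
  unfold mseAtNoise
  rw [hconj, hinv]
  simp only [transpose_mul, Matrix.mul_assoc, ← Matrix.mul_assoc Uᵀ U, hUU, Matrix.one_mul]

lemma mseAtNoise_mono {S : Matrix ν ν ℝ} (hS : S.PosSemidef) (Γ : Matrix κ ν ℝ)
    (A : Matrix π ν ℝ) {x y : ℝ} (hx : 0 < x) (hxy : x ≤ y) :
    mseAtNoise S Γ A x ≤ mseAtNoise S Γ A y := by
  have hB : (Γ * S * Aᵀ)ᵀ = A * S * Γᵀ := by
    have hSt : Sᵀ = S := by simpa using hS.isHermitian.eq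
    rw [transpose_mul, transpose_mul, transpose_transpose, hSt, Matrix.mul_assoc]
  have := (hS.mul_mul_transpose_same A).trace_mul_inv_add_smul_one_mul_transpose_antitone
    (Γ * S * Aᵀ) hx hxy
  rw [hB] at this
  unfold mseAtNoise
  simp only [Matrix.mul_assoc] at this ⊢
  linarith

end NoiseLevel

/-- **paper's Lemma A.3.** For every nonzero analog combining matrix `A`
there is an orthogonal rotation `U` such that `MSE(UA)` equals the expression with the
average `(c/p)Tr(AΣAᵀ)` in place of the maximal diagonal entry, and `MSE(UA) ≤ MSE(A)`. -/
theorem optimal_rotation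
    {k n p : ℕ} (hp : 0 < p)
    (S : Matrix (Fin n) (Fin n) ℝ) (hS : S.PosDef)
    (Γ : Matrix (Fin k) (Fin n) ℝ) (c : ℝ) (hc : 0 < c) :
    ∀ A : Matrix (Fin p) (Fin n) ℝ, A ≠ 0 →
      ∃ U : Matrix (Fin p) (Fin p) ℝ, Uᵀ * U = 1 ∧
        hlMSE S Γ c (U * A)
          = Matrix.trace (Γ * S * Γᵀ)
            - Matrix.trace (Γ * S * Aᵀ *
                (A * S * Aᵀ
                  + ((c / p) * Matrix.trace (A * S * Aᵀ)) • (1 : Matrix (Fin p) (Fin p) ℝ))⁻¹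
                * A * S * Γᵀ) ∧
        hlMSE S Γ c (U * A) ≤ hlMSE S Γ c A := by
  intro A hA
  have : Nonempty (Fin p) := ⟨⟨0, hp⟩⟩
  obtain ⟨U, hU, hdiag⟩ := exists_mem_orthogonalGroup_diag_conj_eq_trace_div (A * S * Aᵀ)
  have hsup : ⨆ l, (U * A * S * (U * A)ᵀ) l l = trace (A * S * Aᵀ) / p := by
    have hconj : U * A * S * (U * A)ᵀ = U * (A * S * Aᵀ) * Uᵀ := by
      simp only [transpose_mul, Matrix.mul_assoc]
    simp only [hconj, hdiag, Fintype.card_fin, ciSup_const]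
  have hUA : hlMSE S Γ c (U * A) = mseAtNoise S Γ A (c / p * trace (A * S * Aᵀ)) := by
    rw [hlMSE_eq_mseAtNoise, mseAtNoise_orthogonal_mul S Γ A hU, hsup]
    congr 1
    ring
  refine ⟨U, (mem_orthogonalGroup_iff' _ _).mp hU, hUA, ?_⟩
  rw [hUA, hlMSE_eq_mseAtNoise]
  refine mseAtNoise_mono hS.posSemidef Γ A
    (by have := hS.trace_mul_mul_transpose_pos hA; positivity) ?_
  rw [div_mul_eq_mul_div, mul_div_assoc]
  gcongr
  simpa using trace_div_card_le_iSup_diag (A * S * Aᵀ)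
end

section
/- Let m ≥ 1, σ₁ ≥ σ₂ ≥ … ≥ σ_m ≥ 0 with σ₁ > 0, and c > 0. Consider maximizing f(α) = Σ_{i=1}^m σ_i² · α_i/(α_i + c) over the simplex { α ∈ ℝ^m : α_i ≥ 0 for all i, Σ_{i=1}^m α_i = 1 }. Then the maximum is attained at the waterfilling allocation α_i* = c (ζ σ_i − 1)⁺, where ζ > 0 is the unique solution of c Σ_{i=1}^m (ζ σ_i − 1)⁺ = 1, and the maximal value equals Σ_{i=1}^m σ_i² · (ζσ_i − 1)⁺ / ((ζσ_i − 1)⁺ + 1); equivalently, the minimal value of Σ_{i=1}^m σ_i² − f(α) over the simplex equals Σ_{i=1}^m σ_i² / ((ζσ_i − 1)⁺ + 1). -/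
/-- Waterfilling solution of the simplex program: maximizing
`f(α) = Σ σᵢ² αᵢ/(αᵢ + c)` over the probability simplex is achieved by
`αᵢ* = c(ζσᵢ − 1)⁺`, with maximal value `Σ σᵢ²(ζσᵢ−1)⁺/((ζσᵢ−1)⁺+1)`; equivalently the
minimal value of `Σ σᵢ² − f(α)` is `Σ σᵢ²/((ζσᵢ−1)⁺+1)`. -/
theorem waterfilling_simplex_optimum
    {m : ℕ} (hm : 0 < m)
    (σ : Fin m → ℝ) (hσanti : Antitone σ) (hσ0 : ∀ i, 0 ≤ σ i)
    (hσ1 : 0 < σ ⟨0, hm⟩)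
    (c : ℝ) (hc : 0 < c)
    (ζ : ℝ) (hζpos : 0 < ζ)
    (hζ : c * ∑ i, max (ζ * σ i - 1) 0 = 1) :
    ((∀ i, 0 ≤ c * max (ζ * σ i - 1) 0) ∧ ∑ i, c * max (ζ * σ i - 1) 0 = 1) ∧
    (∀ α : Fin m → ℝ, (∀ i, 0 ≤ α i) → (∑ i, α i) = 1 →
      ∑ i, σ i ^ 2 * (α i / (α i + c))
        ≤ ∑ i, σ i ^ 2 * ((c * max (ζ * σ i - 1) 0) / (c * max (ζ * σ i - 1) 0 + c))) ∧
    (∑ i, σ i ^ 2 * ((c * max (ζ * σ i - 1) 0) / (c * max (ζ * σ i - 1) 0 + c))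
      = ∑ i, σ i ^ 2 * (max (ζ * σ i - 1) 0 / (max (ζ * σ i - 1) 0 + 1))) ∧
    ((∑ i, σ i ^ 2)
        - ∑ i, σ i ^ 2 * ((c * max (ζ * σ i - 1) 0) / (c * max (ζ * σ i - 1) 0 + c))
      = ∑ i, σ i ^ 2 / (max (ζ * σ i - 1) 0 + 1)) := by
  have hM : ∀ i, (0:ℝ) ≤ max (ζ * σ i - 1) 0 := fun i => le_max_right _ _
  set A : Fin m → ℝ := fun i => c * max (ζ * σ i - 1) 0 with hAdef
  have hA0 : ∀ i, 0 ≤ A i := fun i => mul_nonneg hc.le (hM i)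
  have hAsum : ∑ i, A i = 1 := by
    simpa [hAdef, Finset.mul_sum] using hζ
  have hden : ∀ i, 0 < A i + c := fun i => by
    have := hA0 i; linarith
  refine ⟨⟨hA0, hAsum⟩, ?_, ?_, ?_⟩
  · intro α hα0 hαsum
    set lam : ℝ := 1 / (c * ζ ^ 2) with hlam
    set s : Fin m → ℝ := fun i => σ i ^ 2 * c / (A i + c) ^ 2 with hs
    have tangent : ∀ i, σ i ^ 2 * (α i / (α i + c))
        ≤ σ i ^ 2 * (A i / (A i + c)) + s i * (α i - A i) := by
      intro i
      have hx : 0 < α i + c := by have := hα0 i; linarith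
      have ha := hden i
      have key : σ i ^ 2 * (A i / (A i + c)) + s i * (α i - A i)
          - σ i ^ 2 * (α i / (α i + c))
          = σ i ^ 2 * c * (α i - A i) ^ 2 / ((α i + c) * (A i + c) ^ 2) := by
        simp only [hs]
        field_simp
        ring
      have hnn : 0 ≤ σ i ^ 2 * c * (α i - A i) ^ 2 / ((α i + c) * (A i + c) ^ 2) := by
        positivity
      linarith
    have hslam : ∀ i, s i ≤ lam := by
      intro i
      rcases le_or_gt (ζ * σ i - 1) 0 with h1 | h1
      · have hAi : A i = 0 := by simp [hAdef, max_eq_right h1]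
        have hσζ : ζ * σ i ≤ 1 := by linarith
        have hσζ0 : 0 ≤ ζ * σ i := mul_nonneg hζpos.le (hσ0 i)
        simp only [hs, hAi, hlam, zero_add]
        rw [div_le_div_iff₀ (by positivity) (by positivity)]
        nlinarith [mul_le_mul hσζ hσζ hσζ0 zero_le_one, mul_pos hc hc, sq_nonneg c]
      · have hσpos : 0 < σ i := by nlinarith
        have hAi : A i + c = c * (ζ * σ i) := by
          simp [hAdef, max_eq_left h1.le]; ring
        simp only [hs, hAi, hlam]
        rw [div_le_div_iff₀ (by positivity) (by positivity)]
        ring_nf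
        nlinarith [sq_nonneg (σ i), sq_nonneg ζ]
    have hsA : ∀ i, s i * A i = lam * A i := by
      intro i
      rcases le_or_gt (ζ * σ i - 1) 0 with h1 | h1
      · have hAi : A i = 0 := by simp [hAdef, max_eq_right h1]
        simp [hAi]
      · have hσpos : 0 < σ i := by nlinarith
        have hAi : A i + c = c * (ζ * σ i) := by
          simp [hAdef, max_eq_left h1.le]; ring
        have : s i = lam := by
          simp only [hs, hAi, hlam]
          rw [div_eq_div_iff (by positivity) (by positivity)]
          ring
        rw [this]
    calc ∑ i, σ i ^ 2 * (α i / (α i + c))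
        ≤ ∑ i, (σ i ^ 2 * (A i / (A i + c)) + s i * (α i - A i)) :=
          Finset.sum_le_sum fun i _ => tangent i
      _ = (∑ i, σ i ^ 2 * (A i / (A i + c))) + ((∑ i, s i * α i) - ∑ i, s i * A i) := by
          rw [Finset.sum_add_distrib, ← Finset.sum_sub_distrib]
          congr 1
          exact Finset.sum_congr rfl fun i _ => by ring
      _ ≤ ∑ i, σ i ^ 2 * (A i / (A i + c)) := by
          have h1 : ∑ i, s i * α i ≤ ∑ i, lam * α i :=
            Finset.sum_le_sum fun i _ => mul_le_mul_of_nonneg_right (hslam i) (hα0 i)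
          have h2 : ∑ i, lam * α i = lam := by rw [← Finset.mul_sum, hαsum, mul_one]
          have h3 : ∑ i, s i * A i = lam := by
            rw [Finset.sum_congr rfl fun i _ => hsA i, ← Finset.mul_sum, hAsum, mul_one]
          linarith
  · refine Finset.sum_congr rfl fun i _ => ?_
    have h1 : (0:ℝ) < max (ζ * σ i - 1) 0 + 1 := by have := hM i; linarith
    have : c * max (ζ * σ i - 1) 0 + c = c * (max (ζ * σ i - 1) 0 + 1) := by ring
    rw [this, mul_div_mul_left _ _ (ne_of_gt hc)]
  · rw [← Finset.sum_sub_distrib]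
    refine Finset.sum_congr rfl fun i _ => ?_
    have h1 : (0:ℝ) < max (ζ * σ i - 1) 0 + 1 := by have := hM i; linarith
    have hcc : c * max (ζ * σ i - 1) 0 + c = c * (max (ζ * σ i - 1) 0 + 1) := by ring
    rw [hcc, mul_div_mul_left _ _ (ne_of_gt hc)]
    field_simp
    ring
end

section
/- Let Σ ∈ ℝ^{n×n} be symmetric positive definite, Γ ∈ ℝ^{k×n}, and set Γ̃ = Γ Σ^{1/2} with singular values σ₁ ≥ σ₂ ≥ … (set σ_i = 0 for i exceeding the rank of Γ̃), and assume Γ ≠ 0. Fix p ≥ 1 and c > 0, and for A ∈ ℝ^{p×n}, A ≠ 0, define MSE(A) = Tr(Γ Σ Γᵀ) − Tr( Γ Σ Aᵀ ( A Σ Aᵀ + c · max_{l} (A Σ Aᵀ)_{l,l} · I_p )^{−1} A Σ Γᵀ ). Let ζ > 0 be the unique solution of (c/p) Σ_{i=1}^{p} (ζ σ_i − 1)⁺ = 1. Then the infimum of MSE(A) over A ∈ ℝ^{p×n}, A ≠ 0 is attained, and equals Σ_{i=1}^{k} σ_i² / ((ζ σ_i − 1)⁺ + 1) when p ≥ k,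 and Σ_{i=1}^{p} σ_i² / ((ζ σ_i − 1)⁺ + 1) + Σ_{i=p+1}^{k} σ_i² when p < k. Moreover a minimizer has the form A* = U Λ Vᵀ Σ^{−1/2}, where V is a right-singular-vector matrix of Γ̃, Λ ∈ ℝ^{p×n} is diagonal with (Λ)_{i,i}² = (c/p)(ζ σ_i − 1)⁺, and U ∈ ℝ^{p×p} is an orthogonal matrix making all diagonal entries of U Λ Λᵀ Uᵀ equal. -/
open Matrix

/-- The positive semidefinite square root of a positive semidefinite matrix, as
`Matrix.PosSemidef.sqrt` was defined in the older Mathlib (removed since). -/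
noncomputable def oldPosSemidefSqrt {n : ℕ} {S : Matrix (Fin n) (Fin n) ℝ}
    (hA : S.PosSemidef) : Matrix (Fin n) (Fin n) ℝ :=
  hA.1.eigenvectorUnitary.1 * diagonal ((↑) ∘ (√·) ∘ hA.1.eigenvalues) *
    (star hA.1.eigenvectorUnitary : Matrix (Fin n) (Fin n) ℝ)

/-!
Whiten with `R = Σ^{1/2}` and write `ΓR = U D Vᵀ`. For `B = AR` with `BBᵀ = Q diag(x) Qᵀ`, the
rows of `P = QᵀBV` are orthogonal with squared norms `xⱼ`, and
`MSE(A) = ∑ₐ σₐ² - ∑ₐ σₐ² ∑ⱼ Pⱼₐ² / (xⱼ + γ)`, where `γ = c · maxₗ (BBᵀ)ₗₗ ≥ (c / p) ∑ⱼ xⱼ`.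
With `tᵢ = (ζσᵢ - 1)⁺`, the tangent-line bound `(ζσ)² / (x + γ) ≤ t² / x + 1 / γ` bounds `ζ²` times
the subtracted sum by `∑ₐ rₐ tₐ² + ∑ⱼ xⱼ / γ`, where `rₐ = ∑ⱼ Pⱼₐ² / xⱼ`. Bessel's inequality gives
`rₐ ≤ 1`, and `∑ₐ rₐ ≤ p`, so the first sum is at most `∑_{j<p} tⱼ²` because `t` is antitone; the
choice of `ζ` makes the second one at most `∑_{j<p} tⱼ`; and `(tⱼ² + tⱼ) / ζ² = σⱼ² tⱼ / (tⱼ + 1)`.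
All of this is tight for `B = WΛVᵀ` with `Λⱼⱼ² = (c / p) tⱼ` as soon as the orthogonal `W` makes
the diagonal of `WΛΛᵀWᵀ` constant, so that `γ = c / p`; such a `W` is built from Givens rotations
by induction on `p`.
-/

open Finset Real

lemma oldPosSemidefSqrt_mul_transpose {n : ℕ} {S : Matrix (Fin n) (Fin n) ℝ}
    (hS : S.PosSemidef) : oldPosSemidefSqrt hS * (oldPosSemidefSqrt hS)ᵀ = S := by
  set E : Matrix (Fin n) (Fin n) ℝ := hS.1.eigenvectorUnitary.1
  set D : Matrix (Fin n) (Fin n) ℝ := diagonal ((↑) ∘ (√·) ∘ hS.1.eigenvalues)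
  have hE : star E * E = 1 := Unitary.coe_star_mul_self _
  have hDD : D * D = diagonal (RCLike.ofReal ∘ hS.1.eigenvalues) := by
    simp [D, diagonal_mul_diagonal, Real.mul_self_sqrt (hS.eigenvalues_nonneg _)]
  conv_rhs => rw [hS.1.spectral_theorem, Unitary.conjStarAlgAut_apply, ← hDD]
  simp only [oldPosSemidefSqrt, ← conjTranspose_eq_transpose_of_trivial, conjTranspose_mul,
    diagonal_conjTranspose, star_trivial, star_eq_conjTranspose, conjTranspose_conjTranspose,
    Matrix.mul_assoc]
  rw [← Matrix.mul_assoc Eᴴ, ← star_eq_conjTranspose, hE, Matrix.one_mul]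

lemma exists_orthogonal_eq_mul_diagonal_mul_transpose {m : ℕ} {M : Matrix (Fin m) (Fin m) ℝ}
    (hM : M.IsHermitian) : ∃ (Q : Matrix (Fin m) (Fin m) ℝ) (x : Fin m → ℝ),
      Qᵀ * Q = 1 ∧ M = Q * diagonal x * Qᵀ := by
  refine ⟨hM.eigenvectorUnitary, hM.eigenvalues, ?_, ?_⟩
  · simpa [← conjTranspose_eq_transpose_of_trivial, star_eq_conjTranspose] using
      Unitary.coe_star_mul_self hM.eigenvectorUnitary
  · conv_lhs => rw [hM.spectral_theorem, Unitary.conjStarAlgAut_apply]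
    simp [star_eq_conjTranspose, conjTranspose_eq_transpose_of_trivial]

def rectDiag {m n : ℕ} (f : ℕ → ℝ) : Matrix (Fin m) (Fin n) ℝ :=
  of fun i j => if (i : ℕ) = j then f i else 0

lemma transpose_rectDiag {m n : ℕ} (f : ℕ → ℝ) :
    (rectDiag f : Matrix (Fin m) (Fin n) ℝ)ᵀ = rectDiag f := by
  ext i j
  simp only [rectDiag, transpose_apply, of_apply, eq_comm (a := (j : ℕ))]
  split_ifs with h <;> simp [h]

lemma sum_rectDiag_apply_sq_mul {m n : ℕ} {f : ℕ → ℝ} (hf : ∀ i, n ≤ i → f i = 0)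
    (g : ℕ → ℝ) (j : Fin m) :
    ∑ a : Fin n, (rectDiag f : Matrix (Fin m) (Fin n) ℝ) j a ^ 2 * g a = f j ^ 2 * g j := by
  by_cases hj : (j : ℕ) < n
  · rw [sum_eq_single ⟨j, hj⟩]
    · simp [rectDiag]
    · intro a _ ha
      have : (j : ℕ) ≠ a := fun h => ha (Fin.ext h.symm)
      simp [rectDiag, this]
    · simp
  · have : ∀ a : Fin n, (j : ℕ) ≠ a := fun a h => hj (h ▸ a.isLt)
    simp [rectDiag, this, hf j (not_lt.1 hj)]

lemma sum_mul_sum_rectDiag_sq_div {m n : ℕ} {f : ℕ → ℝ} (hf : ∀ i, n ≤ i → f i = 0)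
    (g : ℕ → ℝ) (d : Fin m → ℝ) :
    ∑ a : Fin n, g a * ∑ j, (rectDiag f : Matrix (Fin m) (Fin n) ℝ) j a ^ 2 / d j
      = ∑ j : Fin m, f j ^ 2 * g j / d j := by
  simp only [mul_sum]
  rw [sum_comm]
  refine sum_congr rfl fun j _ => ?_
  rw [← sum_rectDiag_apply_sq_mul hf g j, sum_div]
  exact sum_congr rfl fun a _ => by ring

lemma rectDiag_mul_transpose {m n : ℕ} {f : ℕ → ℝ} (hf : ∀ i, n ≤ i → f i = 0) :
    (rectDiag f : Matrix (Fin m) (Fin n) ℝ) * (rectDiag f : Matrix (Fin m) (Fin n) ℝ)ᵀ =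
      diagonal fun i : Fin m => f i ^ 2 := by
  ext i l
  rcases eq_or_ne i l with rfl | hil
  · simpa [mul_apply, sq] using sum_rectDiag_apply_sq_mul (m := m) hf (fun _ => 1) i
  · rw [diagonal_apply_ne _ hil, mul_apply]
    refine sum_eq_zero fun a _ => ?_
    have : ¬ ((i : ℕ) = a ∧ (l : ℕ) = a) := fun h => hil (Fin.ext (h.1.trans h.2.symm))
    simp only [rectDiag, transpose_apply, of_apply]
    split_ifs <;> simp_all

lemma transpose_mul_diagonal_mul_apply_self {m n : Type*} [Fintype m] [DecidableEq m]
    (P : Matrix m n ℝ) (e : m → ℝ) (a : n) :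
    (Pᵀ * diagonal e * P) a a = ∑ j, P j a ^ 2 * e j := by
  rw [mul_apply]
  simp only [mul_diagonal, transpose_apply]
  exact sum_congr rfl fun j _ => by ring

lemma eq_sum_sq_of_mul_transpose_eq_diagonal {m n : Type*} [Fintype n] [DecidableEq m]
    {P : Matrix m n ℝ} {x : m → ℝ} (hP : P * Pᵀ = diagonal x) (j : m) :
    x j = ∑ a, P j a ^ 2 := by
  simpa [mul_apply, sq] using (congrFun (congrFun hP j) j).symm

lemma apply_self_le_one_of_isSymm_of_mul_self {n : Type*} [Fintype n] {N : Matrix n n ℝ}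
    (hN : N.IsSymm) (hNN : N * N = N) (a : n) : N a a ≤ 1 := by
  have hsq : N a a = ∑ b, N a b ^ 2 := by
    conv_lhs => rw [← hNN]
    simp only [mul_apply, sq, hN.apply a]
  have hle : N a a ^ 2 ≤ N a a :=
    hsq ▸ single_le_sum (fun b _ => sq_nonneg (N a b)) (mem_univ a)
  nlinarith

/-- Bessel's inequality for the orthogonal rows of `P`: `Pᵀ diag(x)⁻¹ P` is an orthogonal
projection. -/
lemma sum_sq_div_le_one_of_mul_transpose_eq_diagonal {m n : Type*} [Fintype m] [Fintype n]
    [DecidableEq m] {P : Matrix m n ℝ} {x : m → ℝ} (hP : P * Pᵀ = diagonal x) (a : n) :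
    ∑ j, P j a ^ 2 / x j ≤ 1 := by
  set N := Pᵀ * diagonal x⁻¹ * P
  have hNN : N * N = N := by
    simp only [N, Matrix.mul_assoc]
    rw [← Matrix.mul_assoc P, hP]
    have hx : ∀ j, (x j)⁻¹ * (x j * (x j)⁻¹) = (x j)⁻¹ := fun j => by
      rcases eq_or_ne (x j) 0 with h | h <;> simp [h]
    simp only [← Matrix.mul_assoc, diagonal_mul_diagonal, Pi.inv_apply, hx]
    rfl
  have hN : N.IsSymm := by simp [N, Matrix.IsSymm, Matrix.mul_assoc]
  simpa [N, transpose_mul_diagonal_mul_apply_self, div_eq_mul_inv] using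
    apply_self_le_one_of_isSymm_of_mul_self hN hNN a

lemma mul_mul_transpose_eq_diagonal {m n : Type*} [Fintype m] [Fintype n] [DecidableEq m]
    [DecidableEq n] {B : Matrix m n ℝ} {Q : Matrix m m ℝ} {V : Matrix n n ℝ} {x : m → ℝ}
    (hQ : Qᵀ * Q = 1) (hV : Vᵀ * V = 1) (hB : B * Bᵀ = Q * diagonal x * Qᵀ) :
    Qᵀ * B * V * (Qᵀ * B * V)ᵀ = diagonal x := by
  simp only [transpose_mul, transpose_transpose, Matrix.mul_assoc]
  rw [← Matrix.mul_assoc V, mul_eq_one_comm.1 hV, Matrix.one_mul, ← Matrix.mul_assoc B, hB]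
  simp only [Matrix.mul_assoc]
  rw [hQ, Matrix.mul_one, ← Matrix.mul_assoc, hQ, Matrix.one_mul]

lemma transpose_mul_inv_add_smul_mul {m n : Type*} [Fintype m] [Fintype n] [DecidableEq m]
    {B : Matrix m n ℝ} {Q : Matrix m m ℝ} {x : m → ℝ} (hQ : Qᵀ * Q = 1)
    (hB : B * Bᵀ = Q * diagonal x * Qᵀ) {γ : ℝ} (hxγ : ∀ j, x j + γ ≠ 0) :
    Bᵀ * (B * Bᵀ + γ • 1)⁻¹ * B
      = (Qᵀ * B)ᵀ * diagonal (fun j => (x j + γ)⁻¹) * (Qᵀ * B) := by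
  have hQQ : Q * Qᵀ = 1 := mul_eq_one_comm.1 hQ
  have hshift : B * Bᵀ + γ • 1 = Q * diagonal (fun j => x j + γ) * Qᵀ := by
    have : diagonal (fun j => x j + γ) = diagonal x + γ • 1 := by
      rw [smul_one_eq_diagonal, diagonal_add]
    rw [hB, this, Matrix.mul_add, Matrix.add_mul, Matrix.mul_smul, Matrix.mul_one,
      Matrix.smul_mul, hQQ]
  have hinv : (B * Bᵀ + γ • 1)⁻¹ = Q * diagonal (fun j => (x j + γ)⁻¹) * Qᵀ := by
    refine inv_eq_right_inv ?_
    rw [hshift]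
    simp only [Matrix.mul_assoc]
    rw [← Matrix.mul_assoc Qᵀ, hQ, Matrix.one_mul, ← Matrix.mul_assoc (diagonal _),
      diagonal_mul_diagonal]
    simp [hxγ, hQQ]
  rw [hinv, transpose_mul, transpose_transpose]
  simp only [Matrix.mul_assoc]

lemma iSup_diag_mul_transpose_pos {m n : ℕ} {B : Matrix (Fin m) (Fin n) ℝ} (hB : B ≠ 0) :
    0 < ⨆ l, (B * Bᵀ) l l := by
  obtain ⟨l, i, hli⟩ : ∃ l i, B l i ≠ 0 := by
    by_contra! h
    exact hB (ext h)
  refine lt_of_lt_of_le ?_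
    (le_ciSup (f := fun l => (B * Bᵀ) l l) (Set.finite_range _).bddAbove l)
  rw [mul_apply]
  exact sum_pos' (fun j _ => mul_self_nonneg _) ⟨i, mem_univ i, mul_self_pos.2 hli⟩

lemma trace_le_card_mul_iSup_diag {m : ℕ} (M : Matrix (Fin m) (Fin m) ℝ) :
    trace M ≤ m * ⨆ l, M l l := by
  calc trace M ≤ ∑ _l : Fin m, ⨆ l, M l l :=
        sum_le_sum fun l _ => le_ciSup (f := fun l => M l l) (Set.finite_range _).bddAbove l
    _ = m * ⨆ l, M l l := by simp

lemma trace_mul_mul_transpose_of_eq_rectDiag {k n : ℕ} {G : Matrix (Fin k) (Fin n) ℝ}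
    {U : Matrix (Fin k) (Fin k) ℝ} {V : Matrix (Fin n) (Fin n) ℝ} {σ : ℕ → ℝ}
    (hG : G = U * (rectDiag σ : Matrix (Fin k) (Fin n) ℝ) * Vᵀ) (hU : Uᵀ * U = 1)
    (hσ : ∀ i, k ≤ i → σ i = 0) (X : Matrix (Fin n) (Fin n) ℝ) :
    trace (G * X * Gᵀ) = ∑ a : Fin n, σ a ^ 2 * (Vᵀ * X * V) a a := by
  have hGG : Gᵀ * G = V * diagonal (fun a : Fin n => σ a ^ 2) * Vᵀ := by
    rw [hG, ← rectDiag_mul_transpose (m := n) hσ]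
    simp only [transpose_mul, transpose_transpose, transpose_rectDiag, Matrix.mul_assoc]
    rw [← Matrix.mul_assoc Uᵀ, hU, Matrix.one_mul]
  calc trace (G * X * Gᵀ) = trace (X * (Gᵀ * G)) := by
        rw [Matrix.mul_assoc, trace_mul_comm, Matrix.mul_assoc]
    _ = trace (Vᵀ * X * V * diagonal fun a : Fin n => σ a ^ 2) := by
        rw [hGG, ← Matrix.mul_assoc, ← Matrix.mul_assoc, trace_mul_comm]
        simp only [Matrix.mul_assoc]
    _ = _ := by simp only [trace, diag_apply, mul_diagonal, mul_comm]

lemma sum_mul_le_sum_range_of_antitone {n m : ℕ} {g : ℕ → ℝ} (hg : Antitone g) (hgm : 0 ≤ g m)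
    {r : Fin n → ℝ} (hr0 : ∀ a, 0 ≤ r a) (hr1 : ∀ a, r a ≤ 1) (hr : ∑ a, r a ≤ m) :
    ∑ a, r a * g a ≤ ∑ a ∈ range m, g a := by
  have hterm : ∀ a : Fin n, r a * (g a - g m) ≤ if (a : ℕ) < m then g a - g m else 0 := by
    intro a
    split_ifs with h
    · exact mul_le_of_le_one_left (sub_nonneg.2 (hg h.le)) (hr1 a)
    · exact mul_nonpos_of_nonneg_of_nonpos (hr0 a) (sub_nonpos.2 (hg (not_lt.1 h)))
  have hhead : ∑ a : Fin n, (if (a : ℕ) < m then g a - g m else 0)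
      ≤ ∑ a ∈ range m, (g a - g m) := by
    rw [Fin.sum_univ_eq_sum_range (fun a => if a < m then g a - g m else 0), ← sum_filter]
    refine sum_le_sum_of_subset_of_nonneg (fun a => by simp +contextual) fun a ha _ => ?_
    exact sub_nonneg.2 (hg (mem_range.1 ha).le)
  calc ∑ a, r a * g a = ∑ a, r a * (g a - g m) + g m * ∑ a, r a := by
        rw [mul_sum, ← sum_add_distrib]
        exact sum_congr rfl fun a _ => by ring
    _ ≤ ∑ a ∈ range m, (g a - g m) + g m * m :=
        add_le_add ((sum_le_sum fun a _ => hterm a).trans hhead)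
          (mul_le_mul_of_nonneg_left hr hgm)
    _ = ∑ a ∈ range m, g a := by simp [sum_sub_distrib, mul_comm]

/-- Tangent-line bound, with equality at `x = (s - 1) γ` when `1 < s`. -/
lemma sq_div_add_le {s x γ : ℝ} (hs : 0 ≤ s) (hx : 0 < x) (hγ : 0 < γ) :
    s ^ 2 / (x + γ) ≤ max (s - 1) 0 ^ 2 / x + 1 / γ := by
  rw [div_add_div _ _ hx.ne' hγ.ne', div_le_div_iff₀ (by positivity) (by positivity)]
  rcases le_total s 1 with h | h
  · rw [max_eq_right (by linarith)]
    have : s ^ 2 ≤ 1 := by nlinarith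
    nlinarith [mul_pos hx hγ]
  · rw [max_eq_left (by linarith)]
    nlinarith [sq_nonneg ((s - 1) * γ - x)]

lemma sq_mul_sq_div_add_le_of_mul_transpose_eq_diagonal {m n : Type*} [Fintype n]
    [DecidableEq m] {P : Matrix m n ℝ} {x : m → ℝ} (hP : P * Pᵀ = diagonal x) {γ : ℝ}
    (hγ : 0 < γ) {s : ℝ} (hs : 0 ≤ s) (j : m) (a : n) :
    s ^ 2 * (P j a ^ 2 / (x j + γ)) ≤ P j a ^ 2 / x j * max (s - 1) 0 ^ 2 + P j a ^ 2 / γ := by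
  have hrow := eq_sum_sq_of_mul_transpose_eq_diagonal hP j
  rcases (hrow ▸ sum_nonneg fun b _ => sq_nonneg (P j b) : 0 ≤ x j).eq_or_lt with hxj | hxj
  · have : P j a ^ 2 = 0 := (sum_eq_zero_iff_of_nonneg fun b _ => sq_nonneg (P j b)).1
      (hrow.symm.trans hxj.symm) a (mem_univ a)
    simp [this]
  · calc s ^ 2 * (P j a ^ 2 / (x j + γ)) = P j a ^ 2 * (s ^ 2 / (x j + γ)) := by ring
      _ ≤ P j a ^ 2 * (max (s - 1) 0 ^ 2 / x j + 1 / γ) :=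
        mul_le_mul_of_nonneg_left (sq_div_add_le hs hxj hγ) (sq_nonneg _)
      _ = _ := by ring

lemma sum_sq_mul_sum_sq_div_add_le {p n : ℕ} {P : Matrix (Fin p) (Fin n) ℝ} {x : Fin p → ℝ}
    (hP : P * Pᵀ = diagonal x) {γ : ℝ} (hγ : 0 < γ) {s : ℕ → ℝ} (hs : Antitone s)
    (hs0 : ∀ i, 0 ≤ s i) (hx : ∑ j, x j ≤ γ * ∑ j : Fin p, max (s j - 1) 0) :
    ∑ a : Fin n, s a ^ 2 * ∑ j, P j a ^ 2 / (x j + γ)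
      ≤ ∑ j : Fin p, (max (s j - 1) 0 ^ 2 + max (s j - 1) 0) := by
  set t : ℕ → ℝ := fun i => max (s i - 1) 0
  have hrow := eq_sum_sq_of_mul_transpose_eq_diagonal hP
  have hx0 : ∀ j, 0 ≤ x j := fun j => hrow j ▸ sum_nonneg fun a _ => sq_nonneg _
  have ht : Antitone fun i => t i ^ 2 := fun i j hij =>
    pow_le_pow_left₀ (le_max_right _ _) (max_le_max_right 0 (sub_le_sub_right (hs hij) 1)) 2
  have hcheb := sum_mul_le_sum_range_of_antitone ht (sq_nonneg (t p))
    (r := fun a : Fin n => ∑ j, P j a ^ 2 / x j)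
    (fun a => sum_nonneg fun j _ => div_nonneg (sq_nonneg _) (hx0 j))
    (sum_sq_div_le_one_of_mul_transpose_eq_diagonal hP) (by
      rw [sum_comm]
      calc ∑ j, ∑ a : Fin n, P j a ^ 2 / x j ≤ ∑ _j : Fin p, (1 : ℝ) :=
            sum_le_sum fun j _ => by rw [← sum_div, ← hrow]; exact div_self_le_one _
        _ = p := by simp)
  calc ∑ a : Fin n, s a ^ 2 * ∑ j, P j a ^ 2 / (x j + γ)
      ≤ ∑ a : Fin n, ∑ j, (P j a ^ 2 / x j * t a ^ 2 + P j a ^ 2 / γ) := by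
        simp only [mul_sum]
        exact sum_le_sum fun a _ => sum_le_sum fun j _ =>
          sq_mul_sq_div_add_le_of_mul_transpose_eq_diagonal hP hγ (hs0 a) j a
    _ = ∑ a : Fin n, (∑ j, P j a ^ 2 / x j) * t a ^ 2 + (∑ j, x j) / γ := by
        simp only [sum_add_distrib, sum_mul, hrow, sum_div]
        rw [sum_comm (f := fun a j => P j a ^ 2 / γ)]
    _ ≤ ∑ j ∈ range p, t j ^ 2 + ∑ j : Fin p, t j := by
        refine add_le_add hcheb ?_
        rwa [div_le_iff₀ hγ, mul_comm]
    _ = _ := by rw [sum_add_distrib, Fin.sum_univ_eq_sum_range (fun j => t j ^ 2)]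

lemma sq_mul_div_add_one_eq {ζ : ℝ} (hζ : ζ ≠ 0) (s : ℝ) :
    s ^ 2 * (max (ζ * s - 1) 0 / (max (ζ * s - 1) 0 + 1))
      = (max (ζ * s - 1) 0 ^ 2 + max (ζ * s - 1) 0) / ζ ^ 2 := by
  rcases le_total (ζ * s) 1 with h | h
  · simp [max_eq_right (sub_nonpos.2 h)]
  · have hs : s ≠ 0 := by rintro rfl; linarith [mul_zero ζ]
    rw [max_eq_left (sub_nonneg.2 h)]
    field_simp
    ring

lemma sum_range_eq_sum_range_of_eq_zero {M : Type*} [AddCommMonoid M] {f : ℕ → M} {a b : ℕ}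
    (hab : a ≤ b) (hf : ∀ i, a ≤ i → f i = 0) : ∑ i ∈ range b, f i = ∑ i ∈ range a, f i :=
  (sum_subset (range_subset_range.2 hab) fun i _ hi => hf i (by simpa using hi)).symm

lemma optimum_value_eq {k n p : ℕ} {σ : ℕ → ℝ} (hσ : ∀ i, min k n ≤ i → σ i = 0) {ζ : ℝ}
    (hζ : ζ ≠ 0) :
    (if k ≤ p then ∑ i : Fin k, σ i ^ 2 / (max (ζ * σ i - 1) 0 + 1)
      else (∑ i : Fin p, σ i ^ 2 / (max (ζ * σ i - 1) 0 + 1)) + ∑ i ∈ Ico p k, σ i ^ 2)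
      = ∑ a : Fin n, σ a ^ 2
        - ∑ j : Fin p, (max (ζ * σ j - 1) 0 ^ 2 + max (ζ * σ j - 1) 0) / ζ ^ 2 := by
  set t : ℕ → ℝ := fun i => max (ζ * σ i - 1) 0
  set g : ℕ → ℝ := fun i => (t i ^ 2 + t i) / ζ ^ 2
  have hdiv : ∀ i, σ i ^ 2 / (t i + 1) = σ i ^ 2 - g i := fun i => by
    simp only [g, t]
    rw [← sq_mul_div_add_one_eq hζ]
    field_simp
    ring
  have hσk : ∀ i, k ≤ i → σ i = 0 := fun i hi => hσ i (min_le_of_left_le hi)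
  have hg : ∀ i, k ≤ i → g i = 0 := fun i hi => by simp [g, t, hσk i hi]
  have htotal : ∑ a : Fin n, σ a ^ 2 = ∑ i ∈ range k, σ i ^ 2 := by
    rw [Fin.sum_univ_eq_sum_range (fun i => σ i ^ 2),
      sum_range_eq_sum_range_of_eq_zero (min_le_right k n) fun i hi => by simp [hσ i hi],
      sum_range_eq_sum_range_of_eq_zero (a := min k n) (min_le_left k n) fun i hi => by
        simp [hσ i hi]]
  rw [htotal, Fin.sum_univ_eq_sum_range g, Fin.sum_univ_eq_sum_range (fun i => σ i ^ 2 / (t i + 1))]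
  split_ifs with hkp
  · rw [sum_range_eq_sum_range_of_eq_zero hkp hg, ← sum_sub_distrib]
    exact sum_congr rfl fun i _ => hdiv i
  · rw [Fin.sum_univ_eq_sum_range (fun i => σ i ^ 2 / (t i + 1)),
      ← sum_range_add_sum_Ico _ (not_le.1 hkp).le]
    simp only [hdiv, sum_sub_distrib]
    ring

section Givens

variable {ι : Type*} [DecidableEq ι]

noncomputable def givens (i j : ι) (θ : ℝ) : Matrix ι ι ℝ :=
  of fun a => if a = i then cos θ • Pi.single i 1 + sin θ • Pi.single j 1
    else if a = j then -sin θ • Pi.single i 1 + cos θ • Pi.single j 1 else Pi.single a 1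

lemma givens_row (i j : ι) (θ : ℝ) (a : ι) : givens i j θ a =
    if a = i then cos θ • Pi.single i 1 + sin θ • Pi.single j 1
    else if a = j then -sin θ • Pi.single i 1 + cos θ • Pi.single j 1 else Pi.single a 1 := rfl

variable [Fintype ι]

lemma transpose_givens_mul_givens {i j : ι} (hij : i ≠ j) (θ : ℝ) :
    (givens i j θ)ᵀ * givens i j θ = 1 := by
  refine mul_eq_one_comm.1 (ext fun a b => ?_)
  change (givens i j θ a) ⬝ᵥ (givens i j θ b) = _
  simp only [givens_row]
  split_ifs <;> subst_vars <;>
    simp [dotProduct_add, hij.symm, one_apply, Pi.single_apply, mul_comm, *] <;>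
    first | linear_combination cos_sq_add_sin_sq θ | grind

lemma givens_mul_mul_transpose_apply (i j : ι) (θ : ℝ) (X : Matrix ι ι ℝ) (hX : X.IsSymm) :
    (givens i j θ * X * (givens i j θ)ᵀ) i i
      = cos θ ^ 2 * X i i + sin θ ^ 2 * X j j + 2 * sin θ * cos θ * X i j := by
  change (givens i j θ i ᵥ* X) ⬝ᵥ givens i j θ i = _
  simp only [givens_row, ↓reduceIte, add_vecMul, smul_vecMul, single_vecMul, one_smul,
    dotProduct_add, dotProduct_smul, dotProduct_single, Pi.add_apply, Pi.smul_apply, row_apply,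
    smul_eq_mul, hX.apply i j, mul_one]
  ring

end Givens

/-- The block-diagonal matrix `1 ⊕ W`. -/
def extendOne {q : ℕ} (W : Matrix (Fin q) (Fin q) ℝ) : Matrix (Fin (q + 1)) (Fin (q + 1)) ℝ :=
  of (Fin.cons (Fin.cons 1 0) fun a => Fin.cons 0 (W a))

lemma transpose_extendOne_mul_extendOne {q : ℕ} {W : Matrix (Fin q) (Fin q) ℝ}
    (hW : Wᵀ * W = 1) : (extendOne W)ᵀ * extendOne W = 1 := by
  replace hW := mul_eq_one_comm.1 hW
  refine mul_eq_one_comm.1 (ext fun a b => ?_)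
  simp only [mul_apply, transpose_apply, Fin.sum_univ_succ]
  refine Fin.cases ?_ (fun a => ?_) a <;> refine Fin.cases ?_ (fun b => ?_) b
  · simp [extendOne]
  · simp [extendOne, one_apply, (Fin.succ_ne_zero b).symm]
  · simp [extendOne, one_apply]
  · simpa [extendOne, mul_apply, one_apply] using congrFun (congrFun hW a) b

lemma extendOne_mul_mul_transpose_apply_zero {q : ℕ} (W : Matrix (Fin q) (Fin q) ℝ)
    (Y : Matrix (Fin (q + 1)) (Fin (q + 1)) ℝ) :
    (extendOne W * Y * (extendOne W)ᵀ) 0 0 = Y 0 0 := by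
  simp [extendOne, mul_apply, Fin.sum_univ_succ]

lemma submatrix_extendOne_mul_mul_transpose {q : ℕ} (W : Matrix (Fin q) (Fin q) ℝ)
    (Y : Matrix (Fin (q + 1)) (Fin (q + 1)) ℝ) :
    (extendOne W * Y * (extendOne W)ᵀ).submatrix Fin.succ Fin.succ
      = W * Y.submatrix Fin.succ Fin.succ * Wᵀ := by
  ext a b
  simp [extendOne, mul_apply, Fin.sum_univ_succ]

lemma exists_orthogonal_mul_mul_transpose_apply_zero_eq {q : ℕ}
    {X : Matrix (Fin (q + 1)) (Fin (q + 1)) ℝ} (hX : X.IsSymm) :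
    ∃ G : Matrix (Fin (q + 1)) (Fin (q + 1)) ℝ, Gᵀ * G = 1 ∧
      (G * X * Gᵀ) 0 0 = trace X / (q + 1) := by
  set τ := trace X / (q + 1)
  by_cases h0 : X 0 0 = τ
  · exact ⟨1, by simp, by simpa⟩
  have hdev : ∑ l, (X l l - τ) = 0 := by
    rw [sum_sub_distrib, sum_const, card_univ, Fintype.card_fin, nsmul_eq_mul]
    simp only [τ, trace, diag_apply]
    field_simp
    push_cast
    ring
  obtain ⟨j, hj, hneg⟩ : ∃ j ∈ univ.erase 0, (X 0 0 - τ) * (X j j - τ) < 0 := by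
    refine exists_lt_of_sum_lt ?_
    rw [← mul_sum, sum_erase_eq_sub (mem_univ 0), hdev, sum_const_zero]
    nlinarith [sq_pos_of_ne_zero (sub_ne_zero.2 h0)]
  -- rotating in the plane of `e₀` and `eⱼ` moves the `(0, 0)` entry from `X 0 0` to `X j j`
  set f : ℝ → ℝ := fun θ => cos θ ^ 2 * X 0 0 + sin θ ^ 2 * X j j + 2 * sin θ * cos θ * X 0 j
  have hτ : τ ∈ Set.uIcc (f 0) (f (π / 2)) := by
    simp only [f, cos_zero, sin_zero, cos_pi_div_two, sin_pi_div_two, Set.mem_uIcc]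
    rcases mul_neg_iff.1 hneg with ⟨h1, h2⟩ | ⟨h1, h2⟩
    · right; constructor <;> linarith
    · left; constructor <;> linarith
  obtain ⟨θ, -, hθ⟩ := intermediate_value_uIcc (by fun_prop : Continuous f).continuousOn hτ
  exact ⟨givens 0 j θ, transpose_givens_mul_givens (ne_of_mem_erase hj).symm θ,
    (givens_mul_mul_transpose_apply 0 j θ X hX).trans hθ⟩

theorem exists_orthogonal_diag_mul_mul_transpose_eq_trace_div :
    ∀ {q : ℕ} {X : Matrix (Fin q) (Fin q) ℝ}, X.IsSymm →
      ∃ U : Matrix (Fin q) (Fin q) ℝ, Uᵀ * U = 1 ∧ ∀ l, (U * X * Uᵀ) l l = trace X / q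
  | 0, _, _ => ⟨1, by simp, fun l => l.elim0⟩
  | q + 1, X, hX => by
    obtain ⟨G, hG, hG0⟩ := exists_orthogonal_mul_mul_transpose_apply_zero_eq hX
    set X' := G * X * Gᵀ
    have hX' : X'.IsSymm := by simp [X', Matrix.IsSymm, hX.eq, Matrix.mul_assoc]
    have htrace : trace X' = trace X := by
      rw [trace_mul_cycle, hG, Matrix.one_mul]
    obtain ⟨W, hW, hWdiag⟩ :=
      exists_orthogonal_diag_mul_mul_transpose_eq_trace_div (hX'.submatrix Fin.succ)
    refine ⟨extendOne W * G, ?_, fun l => ?_⟩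
    · rw [transpose_mul, Matrix.mul_assoc, ← Matrix.mul_assoc (extendOne W)ᵀ,
        transpose_extendOne_mul_extendOne hW, Matrix.one_mul, hG]
    · have hconj :
          extendOne W * G * X * (extendOne W * G)ᵀ = extendOne W * X' * (extendOne W)ᵀ := by
        simp only [X', transpose_mul, Matrix.mul_assoc]
      rw [hconj]
      refine Fin.cases ?_ (fun l => ?_) l
      · rw [extendOne_mul_mul_transpose_apply_zero, hG0, Nat.cast_succ]
      · have hq : (q : ℝ) ≠ 0 := Nat.cast_ne_zero.2 (Fin.pos l).ne'
        rw [← submatrix_apply (A := extendOne W * X' * (extendOne W)ᵀ) Fin.succ Fin.succ,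
          submatrix_extendOne_mul_mul_transpose, hWdiag,
          eq_sub_of_add_eq' (trace_submatrix_succ X'), htrace, hG0]
        field_simp
        push_cast
        ring

section HardwareLimited

variable {k n p : ℕ} {S R : Matrix (Fin n) (Fin n) ℝ} {Γ : Matrix (Fin k) (Fin n) ℝ}
  {U : Matrix (Fin k) (Fin k) ℝ} {V : Matrix (Fin n) (Fin n) ℝ} {σ : ℕ → ℝ} {c ζ : ℝ}

lemma hlMSE_eq_of_eq_mul_transpose (hS : S = R * Rᵀ) (A : Matrix (Fin p) (Fin n) ℝ) :
    hlMSE S Γ c A = trace (Γ * R * (Γ * R)ᵀ) - trace (Γ * R * ((A * R)ᵀ *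
      (A * R * (A * R)ᵀ + (c * ⨆ l, (A * R * (A * R)ᵀ) l l) • 1)⁻¹ * (A * R)) * (Γ * R)ᵀ) := by
  subst hS
  simp only [hlMSE, transpose_mul, Matrix.mul_assoc]

lemma hlMSE_eq_sum_sub_sum (hS : S = R * Rᵀ)
    (hsvd : Γ * R = U * (rectDiag σ : Matrix (Fin k) (Fin n) ℝ) * Vᵀ)
    (hU : Uᵀ * U = 1) (hV : Vᵀ * V = 1)
    (hσ : ∀ i, k ≤ i → σ i = 0) {A : Matrix (Fin p) (Fin n) ℝ}
    {Q : Matrix (Fin p) (Fin p) ℝ} {x : Fin p → ℝ} (hQ : Qᵀ * Q = 1)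
    (hB : A * R * (A * R)ᵀ = Q * diagonal x * Qᵀ) {γ : ℝ}
    (hγ : γ = c * ⨆ l, (A * R * (A * R)ᵀ) l l) (hxγ : ∀ j, x j + γ ≠ 0) :
    hlMSE S Γ c A = ∑ a : Fin n, σ a ^ 2
      - ∑ a : Fin n, σ a ^ 2 * ∑ j, (Qᵀ * (A * R) * V) j a ^ 2 / (x j + γ) := by
  have htotal := trace_mul_mul_transpose_of_eq_rectDiag hsvd hU hσ 1
  rw [Matrix.mul_one] at htotal
  rw [hlMSE_eq_of_eq_mul_transpose hS, ← hγ, transpose_mul_inv_add_smul_mul hQ hB hxγ, htotal,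
    trace_mul_mul_transpose_of_eq_rectDiag hsvd hU hσ]
  have hP : Vᵀ * ((Qᵀ * (A * R))ᵀ * diagonal (fun j => (x j + γ)⁻¹) * (Qᵀ * (A * R))) * V
      = (Qᵀ * (A * R) * V)ᵀ * diagonal (fun j => (x j + γ)⁻¹) * (Qᵀ * (A * R) * V) := by
    simp only [transpose_mul, Matrix.mul_assoc]
  simp only [hV, one_apply_eq, mul_one, hP, transpose_mul_diagonal_mul_apply_self,
    div_eq_mul_inv]

lemma sum_sub_sum_le_hlMSE (hS : S = R * Rᵀ)
    (hsvd : Γ * R = U * (rectDiag σ : Matrix (Fin k) (Fin n) ℝ) * Vᵀ) (hU : Uᵀ * U = 1)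
    (hV : Vᵀ * V = 1) (hσ : ∀ i, k ≤ i → σ i = 0) (hσanti : Antitone σ) (hσ0 : ∀ i, 0 ≤ σ i)
    (hc : 0 < c) (hζ : 0 < ζ) (hζsum : c / p * ∑ i : Fin p, max (ζ * σ i - 1) 0 = 1)
    {A : Matrix (Fin p) (Fin n) ℝ} (hA : A * R ≠ 0) :
    ∑ a : Fin n, σ a ^ 2
      - ∑ j : Fin p, (max (ζ * σ j - 1) 0 ^ 2 + max (ζ * σ j - 1) 0) / ζ ^ 2
      ≤ hlMSE S Γ c A := by
  set B := A * R
  obtain ⟨Q, x, hQ, hB⟩ := exists_orthogonal_eq_mul_diagonal_mul_transpose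
    (by simpa [conjTranspose_eq_transpose_of_trivial] using isHermitian_mul_conjTranspose_self B)
  have hP := mul_mul_transpose_eq_diagonal hQ hV hB
  have hγ : 0 < c * ⨆ l, (B * Bᵀ) l l := mul_pos hc (iSup_diag_mul_transpose_pos hA)
  have hxsum : ∑ j, x j ≤ c * (⨆ l, (B * Bᵀ) l l) * ∑ j : Fin p, max (ζ * σ j - 1) 0 := by
    calc ∑ j, x j = trace (B * Bᵀ) := by
          rw [hB, trace_mul_cycle, hQ, Matrix.one_mul, trace_diagonal]
      _ ≤ p * ⨆ l, (B * Bᵀ) l l := trace_le_card_mul_iSup_diag _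
      _ = _ := by
          rw [eq_inv_of_mul_eq_one_right hζsum, inv_div]
          field_simp
  have hwf := sum_sq_mul_sum_sq_div_add_le hP hγ (s := fun i => ζ * σ i)
    (fun i j hij => mul_le_mul_of_nonneg_left (hσanti hij) hζ.le)
    (fun i => mul_nonneg hζ.le (hσ0 i)) hxsum
  have hx0 : ∀ j, 0 ≤ x j := fun j =>
    (eq_sum_sq_of_mul_transpose_eq_diagonal hP j) ▸ sum_nonneg fun a _ => sq_nonneg _
  rw [hlMSE_eq_sum_sub_sum hS hsvd hU hV hσ hQ hB rfl fun j =>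
    (add_pos_of_nonneg_of_pos (hx0 j) hγ).ne', ← sum_div, sub_le_sub_iff_left,
    le_div_iff₀ (by positivity), sum_mul]
  refine (le_of_eq (sum_congr rfl fun a _ => ?_)).trans hwf
  ring

lemma hlMSE_eq_of_mul_eq (hS : S = R * Rᵀ)
    (hsvd : Γ * R = U * (rectDiag σ : Matrix (Fin k) (Fin n) ℝ) * Vᵀ) (hU : Uᵀ * U = 1)
    (hV : Vᵀ * V = 1) (hσ : ∀ i, min k n ≤ i → σ i = 0) (hc : 0 < c) (hζ : ζ ≠ 0)
    (hζsum : c / p * ∑ i : Fin p, max (ζ * σ i - 1) 0 = 1) {W : Matrix (Fin p) (Fin p) ℝ}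
    (hW : Wᵀ * W = 1) {Λ : Matrix (Fin p) (Fin n) ℝ}
    (hΛ : Λ = rectDiag fun i => √(c / p * max (ζ * σ i - 1) 0))
    (hWdiag : ∀ l, (W * (Λ * Λᵀ) * Wᵀ) l l = trace (Λ * Λᵀ) / p)
    {A : Matrix (Fin p) (Fin n) ℝ} (hA : A * R = W * Λ * Vᵀ) :
    A ≠ 0 ∧ hlMSE S Γ c A = ∑ a : Fin n, σ a ^ 2
      - ∑ j : Fin p, (max (ζ * σ j - 1) 0 ^ 2 + max (ζ * σ j - 1) 0) / ζ ^ 2 := by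
  have hp : 0 < p := Nat.pos_of_ne_zero fun hp => by simp [hp] at hζsum
  set y : ℕ → ℝ := fun i => c / p * max (ζ * σ i - 1) 0
  have hy0 : ∀ i, 0 ≤ y i := fun i => by positivity
  have hσn : ∀ i, n ≤ i → √(y i) = 0 := fun i hi => by simp [y, hσ i (min_le_of_right_le hi)]
  have hΛΛ : Λ * Λᵀ = diagonal fun j : Fin p => y j := by
    rw [hΛ, rectDiag_mul_transpose hσn]
    exact congrArg diagonal (funext fun j => sq_sqrt (hy0 j))
  have htr : trace (Λ * Λᵀ) = 1 := by rw [hΛΛ, trace_diagonal, ← mul_sum, hζsum]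
  have hBB : A * R * (A * R)ᵀ = W * diagonal (fun j : Fin p => y j) * Wᵀ := by
    rw [hA, ← hΛΛ]
    simp only [transpose_mul, transpose_transpose, Matrix.mul_assoc]
    rw [← Matrix.mul_assoc Vᵀ V, hV, Matrix.one_mul]
  refine ⟨fun h0 => ?_, ?_⟩
  · have := congrArg trace hBB
    rw [h0, Matrix.zero_mul, Matrix.zero_mul, trace_zero, trace_mul_cycle, hW, Matrix.one_mul,
      ← hΛΛ, htr] at this
    exact zero_ne_one this
  have : Nonempty (Fin p) := ⟨⟨0, hp⟩⟩
  have hγ : c / p = c * ⨆ l, (A * R * (A * R)ᵀ) l l := by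
    simp_rw [hBB, ← hΛΛ, hWdiag, htr, ciSup_const]
    ring
  have hP : Wᵀ * (A * R) * V = Λ := by
    rw [hA]
    simp only [Matrix.mul_assoc]
    rw [hV, Matrix.mul_one, ← Matrix.mul_assoc, hW, Matrix.one_mul]
  rw [hlMSE_eq_sum_sub_sum hS hsvd hU hV (fun i hi => hσ i (min_le_of_left_le hi)) hW hBB hγ
    fun j => by positivity, hP, hΛ,
    sum_mul_sum_rectDiag_sq_div hσn (fun i => σ i ^ 2) fun j => y j + c / p]
  congr 1
  refine sum_congr rfl fun j _ => ?_
  rw [sq_sqrt (hy0 j), ← sq_mul_div_add_one_eq hζ]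
  simp only [y]
  field_simp

end HardwareLimited

theorem hardware_limited_task_based_quantizer_optimum_general
    {k n p : ℕ}
    (S : Matrix (Fin n) (Fin n) ℝ) (hS : S.PosDef)
    (Γ : Matrix (Fin k) (Fin n) ℝ)
    (c : ℝ) (hc : 0 < c)
    (σ : ℕ → ℝ) (hσanti : Antitone σ) (hσ0 : ∀ i, 0 ≤ σ i)
    (hσpad : ∀ i, min k n ≤ i → σ i = 0)
    (Usvd : Matrix (Fin k) (Fin k) ℝ) (hUsvd : Usvdᵀ * Usvd = 1)
    (Vsvd : Matrix (Fin n) (Fin n) ℝ) (hVsvd : Vsvdᵀ * Vsvd = 1)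
    (hsvd : Γ * oldPosSemidefSqrt hS.posSemidef
      = Usvd * (Matrix.of fun (i : Fin k) (j : Fin n) =>
          if (i : ℕ) = (j : ℕ) then σ (i : ℕ) else 0) * Vsvdᵀ)
    (ζ : ℝ) (hζpos : 0 < ζ)
    (hζ : (c / p) * ∑ i : Fin p, max (ζ * σ (i : ℕ) - 1) 0 = 1) :
    (∀ A : Matrix (Fin p) (Fin n) ℝ, A ≠ 0 →
      (if k ≤ p then ∑ i : Fin k, σ (i : ℕ) ^ 2 / (max (ζ * σ (i : ℕ) - 1) 0 + 1)
        else (∑ i : Fin p, σ (i : ℕ) ^ 2 / (max (ζ * σ (i : ℕ) - 1) 0 + 1))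
          + ∑ i ∈ Finset.Ico p k, σ i ^ 2)
        ≤ hlMSE S Γ c A) ∧
    ∃ (U : Matrix (Fin p) (Fin p) ℝ) (Λ : Matrix (Fin p) (Fin n) ℝ),
      Uᵀ * U = 1 ∧
      (∀ (i : Fin p) (j : Fin n), (i : ℕ) ≠ (j : ℕ) → Λ i j = 0) ∧
      (∀ (i : Fin p) (j : Fin n), (i : ℕ) = (j : ℕ) →
        Λ i j ^ 2 = (c / p) * max (ζ * σ (i : ℕ) - 1) 0) ∧
      (∀ l l' : Fin p, (U * Λ * Λᵀ * Uᵀ) l l = (U * Λ * Λᵀ * Uᵀ) l' l') ∧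
      U * Λ * Vsvdᵀ * (oldPosSemidefSqrt hS.posSemidef)⁻¹ ≠ 0 ∧
      hlMSE S Γ c (U * Λ * Vsvdᵀ * (oldPosSemidefSqrt hS.posSemidef)⁻¹)
        = (if k ≤ p then ∑ i : Fin k, σ (i : ℕ) ^ 2 / (max (ζ * σ (i : ℕ) - 1) 0 + 1)
            else (∑ i : Fin p, σ (i : ℕ) ^ 2 / (max (ζ * σ (i : ℕ) - 1) 0 + 1))
              + ∑ i ∈ Finset.Ico p k, σ i ^ 2) := by
  set R := oldPosSemidefSqrt hS.posSemidef
  have hRR : S = R * Rᵀ := (oldPosSemidefSqrt_mul_transpose _).symm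
  have hR : IsUnit R.det := by
    have := hS.det_pos
    rw [hRR, det_mul, det_transpose] at this
    exact isUnit_iff_ne_zero.2 fun h => by simp [h] at this
  rw [optimum_value_eq hσpad hζpos.ne']
  refine ⟨fun A hA => sum_sub_sum_le_hlMSE hRR hsvd hUsvd hVsvd
    (fun i hi => hσpad i (min_le_of_left_le hi)) hσanti hσ0 hc hζpos hζ fun h => hA ?_, ?_⟩
  · rw [← Matrix.mul_one A, ← mul_nonsing_inv R hR, ← Matrix.mul_assoc, h, Matrix.zero_mul]
  set Λ : Matrix (Fin p) (Fin n) ℝ := rectDiag fun i => √(c / p * max (ζ * σ i - 1) 0)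
  obtain ⟨U, hU, hUdiag⟩ := exists_orthogonal_diag_mul_mul_transpose_eq_trace_div
    (X := Λ * Λᵀ) (by simp [Matrix.IsSymm])
  have hAR : U * Λ * Vsvdᵀ * R⁻¹ * R = U * Λ * Vsvdᵀ := by
    rw [Matrix.mul_assoc _ R⁻¹, nonsing_inv_mul R hR, Matrix.mul_one]
  obtain ⟨hA, hopt⟩ :=
    hlMSE_eq_of_mul_eq hRR hsvd hUsvd hVsvd hσpad hc hζpos.ne' hζ hU rfl hUdiag hAR
  refine ⟨U, Λ, hU, fun i j hij => if_neg hij, fun i j hij => ?_, fun l l' => ?_, hA, hopt⟩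
  · simp only [Λ, rectDiag, of_apply, if_pos hij]
    exact sq_sqrt (mul_nonneg (div_nonneg hc.le p.cast_nonneg) (le_max_right _ _))
  · simp only [Matrix.mul_assoc] at hUdiag ⊢
    rw [hUdiag, hUdiag]

/-- **paper's Theorem 1.** With `Γ̃ = ΓΣ^{1/2} = U' D V'ᵀ` an SVD with
descending singular values `σ` (padded by zeros), and `ζ` the waterfilling threshold solving
`(c/p)Σᵢ₌₁^p (ζσᵢ−1)⁺ = 1`, the infimum of `MSE(A)` over nonzero `A ∈ ℝ^{p×n}` is attained
and equals `Σᵢ₌₁^k σᵢ²/((ζσᵢ−1)⁺+1)` if `p ≥ k`, and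
`Σᵢ₌₁^p σᵢ²/((ζσᵢ−1)⁺+1) + Σᵢ₌ₚ₊₁^k σᵢ²` if `p < k`; moreover a minimizer has the form
`A* = U Λ V'ᵀ Σ^{−1/2}` with `U` orthogonal equalizing the diagonal of `UΛΛᵀUᵀ` and
`(Λ)ᵢᵢ² = (c/p)(ζσᵢ−1)⁺`. -/
theorem hardware_limited_task_based_quantizer_optimum
    {k n p : ℕ} (hp : 0 < p) (hk : 0 < k)
    (S : Matrix (Fin n) (Fin n) ℝ) (hS : S.PosDef)
    (Γ : Matrix (Fin k) (Fin n) ℝ) (hΓ : Γ ≠ 0)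
    (c : ℝ) (hc : 0 < c)
    (σ : ℕ → ℝ) (hσanti : Antitone σ) (hσ0 : ∀ i, 0 ≤ σ i)
    (hσpad : ∀ i, min k n ≤ i → σ i = 0)
    (Usvd : Matrix (Fin k) (Fin k) ℝ) (hUsvd : Usvdᵀ * Usvd = 1)
    (Vsvd : Matrix (Fin n) (Fin n) ℝ) (hVsvd : Vsvdᵀ * Vsvd = 1)
    (hsvd : Γ * oldPosSemidefSqrt hS.posSemidef
      = Usvd * (Matrix.of fun (i : Fin k) (j : Fin n) =>
          if (i : ℕ) = (j : ℕ) then σ (i : ℕ) else 0) * Vsvdᵀ)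
    (ζ : ℝ) (hζpos : 0 < ζ)
    (hζ : (c / p) * ∑ i : Fin p, max (ζ * σ (i : ℕ) - 1) 0 = 1) :
    (∀ A : Matrix (Fin p) (Fin n) ℝ, A ≠ 0 →
      (if k ≤ p then ∑ i : Fin k, σ (i : ℕ) ^ 2 / (max (ζ * σ (i : ℕ) - 1) 0 + 1)
        else (∑ i : Fin p, σ (i : ℕ) ^ 2 / (max (ζ * σ (i : ℕ) - 1) 0 + 1))
          + ∑ i ∈ Finset.Ico p k, σ i ^ 2)
        ≤ hlMSE S Γ c A) ∧
    ∃ (U : Matrix (Fin p) (Fin p) ℝ) (Λ : Matrix (Fin p) (Fin n) ℝ),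
      Uᵀ * U = 1 ∧
      (∀ (i : Fin p) (j : Fin n), (i : ℕ) ≠ (j : ℕ) → Λ i j = 0) ∧
      (∀ (i : Fin p) (j : Fin n), (i : ℕ) = (j : ℕ) →
        Λ i j ^ 2 = (c / p) * max (ζ * σ (i : ℕ) - 1) 0) ∧
      (∀ l l' : Fin p, (U * Λ * Λᵀ * Uᵀ) l l = (U * Λ * Λᵀ * Uᵀ) l' l') ∧
      U * Λ * Vsvdᵀ * (oldPosSemidefSqrt hS.posSemidef)⁻¹ ≠ 0 ∧
      hlMSE S Γ c (U * Λ * Vsvdᵀ * (oldPosSemidefSqrt hS.posSemidef)⁻¹)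
        = (if k ≤ p then ∑ i : Fin k, σ (i : ℕ) ^ 2 / (max (ζ * σ (i : ℕ) - 1) 0 + 1)
            else (∑ i : Fin p, σ (i : ℕ) ^ 2 / (max (ζ * σ (i : ℕ) - 1) 0 + 1))
              + ∑ i ∈ Finset.Ico p k, σ i ^ 2) :=
  hardware_limited_task_based_quantizer_optimum_general S hS Γ c hc σ hσanti hσ0 hσpad Usvd hUsvd
    Vsvd hVsvd hsvd ζ hζpos hζ
end
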